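/- arXiv:2402.09998 — 4 statements merged into one kernel-verified Lean document; each statement's English description precedes it below -/
import Mathlib

section
/- Let G be a graph with a k-list-assignment L (every list has size exactly k) such that G is not L-colourable. Then there exists an integer j ≥ k and sets Y ⊆ ⋃_v L(v) with |Y| = j and X ⊆ V(G) with |X| = j+1 such that L(x) ⊆ Y for every x ∈ X. -/
/-- If `G` has a `k`-list-assignment `L` for which it is not `L`-colourable, then there are
`j ≥ k`, a set `Y` of `j` colours from `⋃ v, L v` and a set `X` of `j + 1` vertices all of whose
lists are contained in `Y`. -/
theorem non_list_colourable_hall_violator {V : Type*} [Fintype V] [DecidableEq V]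
    (G : SimpleGraph V) (k : ℕ) (L : V → Finset ℕ) (hL : ∀ v, (L v).card = k)
    (hnc : ¬ ∃ c : V → ℕ, (∀ v, c v ∈ L v) ∧ ∀ u v, G.Adj u v → c u ≠ c v) :
    ∃ j : ℕ, k ≤ j ∧ ∃ Y : Finset ℕ, Y.card = j ∧ Y ⊆ Finset.univ.biUnion L ∧
      ∃ X : Finset V, X.card = j + 1 ∧ ∀ x ∈ X, L x ⊆ Y := by
  -- If Hall's condition held, we would get an injective SDR, i.e. a rainbow proper colouring.
  have hall : ¬ ∀ S : Finset V, S.card ≤ (S.biUnion L).card := by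
    intro h
    obtain ⟨c, hcinj, hc⟩ :=
      (Finset.all_card_le_biUnion_card_iff_exists_injective (t := L)).mp h
    exact hnc ⟨c, hc, fun u v huv => fun hcc => G.ne_of_adj huv (hcinj hcc)⟩
  push_neg at hall
  obtain ⟨S, hS⟩ := hall
  set Y := S.biUnion L with hY
  have hSne : S.Nonempty := by
    rcases S.eq_empty_or_nonempty with rfl | h
    · simp at hS
    · exact h
  obtain ⟨v, hv⟩ := hSne
  have hkY : k ≤ Y.card := by
    rw [← hL v]
    exact Finset.card_le_card (Finset.subset_biUnion_of_mem L hv)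
  obtain ⟨X, hXS, hXcard⟩ := Finset.exists_subset_card_eq (n := Y.card + 1) hS
  refine ⟨Y.card, hkY, Y, rfl, ?_, X, hXcard, ?_⟩
  · exact Finset.biUnion_subset_biUnion_of_subset_left L (Finset.subset_univ S)
  · intro x hx
    exact Finset.subset_biUnion_of_mem L (hXS hx)
end

section
/- Let G be a graph with a k-list-assignment L such that G is minimal non-L-colourable, and let U = V(G) with |U| = i. Then the total number of colours |⋃_{v∈U} L(v)| is at most ik/2. -/
/-- If `G` is minimal non-`L`-colourable for a `k`-list-assignment `L` and has `i` vertices,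
then the total number of colours `|⋃ v, L v|` is at most `i k / 2`. -/
theorem minimal_non_colourable_total_colours {V : Type*} [Fintype V] [DecidableEq V]
    (G : SimpleGraph V) (k : ℕ) (L : V → Finset ℕ) (hL : ∀ v, (L v).card = k)
    (hnc : ¬ ∃ c : V → ℕ, (∀ v, c v ∈ L v) ∧ ∀ u v, G.Adj u v → c u ≠ c v)
    (hmin : ∀ v : V, ∃ c : {u : V // u ≠ v} → ℕ,
      (∀ u : {u : V // u ≠ v}, c u ∈ L u.1) ∧
        ∀ a b : {u : V // u ≠ v}, G.Adj a.1 b.1 → c a ≠ c b) :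
    2 * (Finset.univ.biUnion L).card ≤ Fintype.card V * k := by
  classical
  -- each colour appears in at least two lists
  have key : ∀ x ∈ Finset.univ.biUnion L,
      2 ≤ (Finset.univ.filter (fun v => x ∈ L v)).card := by
    intro x hx
    simp only [Finset.mem_biUnion, Finset.mem_univ, true_and] at hx
    obtain ⟨v, hv⟩ := hx
    by_contra hlt
    push_neg at hlt
    -- x appears only in L v
    have honly : ∀ w, w ≠ v → x ∉ L w := by
      intro w hw hxw
      have hsub : ({v, w} : Finset V) ⊆ Finset.univ.filter (fun v => x ∈ L v) := by
        intro y hy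
        simp only [Finset.mem_insert, Finset.mem_singleton] at hy
        rcases hy with rfl | rfl <;> simp [hv, hxw]
      have h2 : ({v, w} : Finset V).card = 2 := by
        rw [Finset.card_insert_of_notMem (by simp [Ne.symm hw]), Finset.card_singleton]
      have := Finset.card_le_card hsub
      omega
    obtain ⟨c, hc1, hc2⟩ := hmin v
    apply hnc
    refine ⟨fun u => if h : u = v then x else c ⟨u, h⟩, ?_, ?_⟩
    · intro u
      by_cases h : u = v
      · subst h; simp [hv]
      · simp only [dif_neg h]; exact hc1 ⟨u, h⟩
    · intro a b hab
      by_cases ha : a = v <;> by_cases hb : b = v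
      · exact absurd (ha.trans hb.symm) hab.ne
      · simp only [dif_pos ha, dif_neg hb]
        intro heq
        exact honly b hb (by rw [heq]; exact hc1 ⟨b, hb⟩)
      · simp only [dif_neg ha, dif_pos hb]
        intro heq
        exact honly a ha (heq ▸ hc1 ⟨a, ha⟩)
      · simp only [dif_neg ha, dif_neg hb]
        exact hc2 ⟨a, ha⟩ ⟨b, hb⟩ hab
  -- double counting
  calc 2 * (Finset.univ.biUnion L).card
      = ∑ x ∈ Finset.univ.biUnion L, 2 := by rw [Finset.sum_const, smul_eq_mul, mul_comm]
    _ ≤ ∑ x ∈ Finset.univ.biUnion L, (Finset.univ.filter (fun v => x ∈ L v)).card :=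
        Finset.sum_le_sum key
    _ = ∑ x ∈ Finset.univ.biUnion L, ∑ v : V, if x ∈ L v then 1 else 0 :=
        Finset.sum_congr rfl fun x _ => Finset.card_filter _ _
    _ = ∑ v : V, ∑ x ∈ Finset.univ.biUnion L, if x ∈ L v then 1 else 0 :=
        Finset.sum_comm
    _ = ∑ v : V, (L v).card := by
        refine Finset.sum_congr rfl fun v _ => ?_
        rw [← Finset.card_filter]
        congr 1
        ext x
        simp only [Finset.mem_filter, Finset.mem_biUnion, Finset.mem_univ, true_and]
        exact ⟨fun h => h.2, fun h => ⟨⟨v, h⟩, h⟩⟩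
    _ = Fintype.card V * k := by
        simp only [hL, Finset.sum_const, Finset.card_univ, smul_eq_mul]
end

section
/- Let G be a graph on n vertices with a k-list-assignment L such that G is minimal non-L-colourable. Then, denoting ℓ = |⋃_v L(v)|, there holds ℓ ≤ (nk - k(k-1))/2, provided n ≥ k+1. -/
/-- Double counting: sum over colours of fibre sizes equals sum of list sizes. -/
lemma double_count {V : Type*} [DecidableEq V] (L : V → Finset ℕ)
    (S : Finset V) (C : Finset ℕ) (h : ∀ v ∈ S, L v ⊆ C) :
    ∑ c ∈ C, (S.filter (fun v => c ∈ L v)).card = ∑ v ∈ S, (L v).card := by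
  simp_rw [Finset.card_filter]
  rw [Finset.sum_comm]
  refine Finset.sum_congr rfl fun v hv => ?_
  rw [← Finset.card_filter]
  congr 1
  rw [Finset.filter_mem_eq_inter, Finset.inter_eq_right]
  exact h v hv

/-- If `G` is minimal non-`L`-colourable for a `k`-list-assignment `L` (`k ≥ 2`) on `n ≥ k + 1`
vertices, then `ℓ = |⋃ v, L v|` satisfies `ℓ ≤ (n k - k (k - 1)) / 2`. -/
theorem minimal_non_colourable_total_colours_strong {V : Type*} [Fintype V] [DecidableEq V]
    (G : SimpleGraph V) (k : ℕ) (hk : 2 ≤ k)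
    (hn : k + 1 ≤ Fintype.card V)
    (L : V → Finset ℕ) (hL : ∀ v, (L v).card = k)
    (hnc : ¬ ∃ c : V → ℕ, (∀ v, c v ∈ L v) ∧ ∀ u v, G.Adj u v → c u ≠ c v)
    (hmin : ∀ v : V, ∃ c : {u : V // u ≠ v} → ℕ,
      (∀ u : {u : V // u ≠ v}, c u ∈ L u.1) ∧
        ∀ a b : {u : V // u ≠ v}, G.Adj a.1 b.1 → c a ≠ c b) :
    2 * (Finset.univ.biUnion L).card + k * (k - 1) ≤ Fintype.card V * k := by
  classical
  set U : Finset ℕ := Finset.univ.biUnion L with hU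
  -- every colour lies in at least two lists
  have hdeg2 : ∀ c ∈ U, 2 ≤ (Finset.univ.filter (fun v => c ∈ L v)).card := by
    intro c hc
    by_contra hlt
    push_neg at hlt
    obtain ⟨v, hv⟩ := Finset.mem_biUnion.mp hc
    have hvmem : v ∈ Finset.univ.filter (fun u => c ∈ L u) := by
      simp [hv.2]
    have hone : (Finset.univ.filter (fun v => c ∈ L v)).card = 1 := by
      have : 1 ≤ (Finset.univ.filter (fun v => c ∈ L v)).card :=
        Finset.card_pos.mpr ⟨v, hvmem⟩
      omega
    obtain ⟨w, hw⟩ := Finset.card_eq_one.mp hone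
    have hvw : v = w := by
      have := hw ▸ hvmem; simpa using this
    subst hvw
    have honly : ∀ u : V, u ≠ v → c ∉ L u := by
      intro u hu hcu
      have : u ∈ Finset.univ.filter (fun x => c ∈ L x) := by simp [hcu]
      rw [hw] at this
      exact hu (by simpa using this)
    obtain ⟨c', hc'mem, hc'prop⟩ := hmin v
    apply hnc
    refine ⟨fun u => if h : u ≠ v then c' ⟨u, h⟩ else c, ?_, ?_⟩
    · intro u
      by_cases h : u ≠ v
      · simpa [h] using hc'mem ⟨u, h⟩
      · push_neg at h; subst h; simpa using hv.2
    · intro a b hab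
      have hane : a ≠ b := G.ne_of_adj hab
      by_cases ha : a ≠ v <;> by_cases hb : b ≠ v
      · simpa [ha, hb] using hc'prop ⟨a, ha⟩ ⟨b, hb⟩ hab
      · push_neg at hb; subst hb
        simp only [dif_pos ha, dif_neg (by simp : ¬(b:V) ≠ b)]
        intro heq
        exact honly a ha (heq ▸ hc'mem ⟨a, ha⟩)
      · push_neg at ha; subst ha
        simp only [dif_neg (by simp : ¬(a:V) ≠ a), dif_pos hb]
        intro heq
        exact honly b hb (heq ▸ hc'mem ⟨b, hb⟩)
      · push_neg at ha hb; subst ha; exact absurd hb hane.symm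
  -- Hall's condition fails
  have hhall : ¬ ∀ s : Finset V, s.card ≤ (s.biUnion L).card := by
    intro h
    obtain ⟨f, hfinj, hfmem⟩ :=
      (Finset.all_card_le_biUnion_card_iff_exists_injective L).mp h
    exact hnc ⟨f, hfmem, fun u v huv => fun he => G.ne_of_adj huv (hfinj he)⟩
  push_neg at hhall
  -- minimal violating set
  have hne : (Finset.univ.powerset.filter
      (fun S : Finset V => (S.biUnion L).card < S.card)).Nonempty := by
    obtain ⟨S, hS⟩ := hhall
    exact ⟨S, by simp [hS]⟩
  obtain ⟨S, hSmem, hSmin⟩ := Finset.exists_min_image _ Finset.card hne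
  simp only [Finset.mem_filter, Finset.mem_powerset] at hSmem
  have hSviol : (S.biUnion L).card < S.card := hSmem.2
  have hSne : S.Nonempty := Finset.card_pos.mp (by omega)
  obtain ⟨v0, hv0⟩ := hSne
  have herase : ∀ v ∈ S, (S.erase v).card ≤ ((S.erase v).biUnion L).card := by
    intro v hv
    by_contra hlt
    push_neg at hlt
    have := hSmin (S.erase v) (by simp [hlt])
    have hcard : (S.erase v).card < S.card := Finset.card_erase_lt_of_mem hv
    omega
  set C : Finset ℕ := S.biUnion L with hC
  have hjcard : C.card + 1 = S.card := by
    have h1 := herase v0 hv0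
    have h2 : ((S.erase v0).biUnion L).card ≤ C.card :=
      Finset.card_le_card (Finset.biUnion_subset_biUnion_of_subset_left L (Finset.erase_subset _ _))
    have h3 : (S.erase v0).card = S.card - 1 := Finset.card_erase_of_mem hv0
    omega
  have hjk : k ≤ C.card := by
    have : L v0 ⊆ C := Finset.subset_biUnion_of_mem L hv0
    calc k = (L v0).card := (hL v0).symm
      _ ≤ C.card := Finset.card_le_card this
  have hCU : C ⊆ U := by
    intro c hc
    obtain ⟨v, _, hv2⟩ := Finset.mem_biUnion.mp hc
    exact Finset.mem_biUnion.mpr ⟨v, Finset.mem_univ v, hv2⟩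
  -- total count
  have htot : ∑ c ∈ U, (Finset.univ.filter (fun v => c ∈ L v)).card
      = Fintype.card V * k := by
    rw [double_count L Finset.univ U (fun v _ => Finset.subset_biUnion_of_mem L (Finset.mem_univ v))]
    simp [hL, Finset.sum_const, mul_comm]
  have hStot : ∑ c ∈ C, (S.filter (fun v => c ∈ L v)).card = S.card * k := by
    rw [double_count L S C (fun v hv => Finset.subset_biUnion_of_mem L hv)]
    simp [hL, Finset.sum_const, mul_comm]
  have hsplit : ∑ c ∈ U \ C, (Finset.univ.filter (fun v => c ∈ L v)).card
      + ∑ c ∈ C, (Finset.univ.filter (fun v => c ∈ L v)).card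
      = Fintype.card V * k := by rw [Finset.sum_sdiff hCU, htot]
  have hlow1 : 2 * (U \ C).card ≤ ∑ c ∈ U \ C, (Finset.univ.filter (fun v => c ∈ L v)).card := by
    calc 2 * (U \ C).card = ∑ _c ∈ U \ C, 2 := by
          rw [Finset.sum_const, smul_eq_mul, mul_comm]
      _ ≤ _ := Finset.sum_le_sum fun c hc => hdeg2 c (Finset.mem_sdiff.mp hc).1
  have hlow2 : S.card * k ≤ ∑ c ∈ C, (Finset.univ.filter (fun v => c ∈ L v)).card := by
    rw [← hStot]
    refine Finset.sum_le_sum fun c hc => ?_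
    exact Finset.card_le_card (Finset.filter_subset_filter _ (Finset.subset_univ S))
  have hUsplit : (U \ C).card + C.card = U.card := Finset.card_sdiff_add_card_eq_card hCU
  -- final arithmetic
  obtain ⟨a, ha⟩ : ∃ a, C.card = k + a := ⟨C.card - k, by omega⟩
  obtain ⟨b, hb⟩ : ∃ b, k = 2 + b := ⟨k - 2, by omega⟩
  subst hb
  have hkey : S.card * (2 + b) + 2 * (U \ C).card ≤ Fintype.card V * (2 + b) := by omega
  have hsub : 2 + b - 1 = 1 + b := by omega
  rw [hsub]
  nlinarith [hkey, hUsplit, hjcard, ha, Nat.zero_le (a*b)]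
end

section
/- Let s ≥ 1 be an integer and ψ : [s, ∞) → (0, ∞) a non-decreasing continuous function. Let 𝒢 be a class of graphs closed under taking induced subgraphs such that every G ∈ 𝒢 on at least s vertices has an independent set of size at least ψ(|V(G)|). Then every G ∈ 𝒢 on n ≥ s vertices satisfies χ(G) ≤ s + ∫_s^n 1/ψ(x) dx. -/
/-- If `𝒢` (here a predicate `P` on graphs on `Fin n`) is closed under induced subgraphs and
every graph in `𝒢` on at least `s` vertices has an independent set of size at least `ψ(n)`,
where `ψ` is positive, non-decreasing and continuous on `[s, ∞)`, then every `G ∈ 𝒢` on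
`n ≥ s` vertices satisfies `χ(G) ≤ s + ∫_s^n 1 / ψ(x) dx`. -/
theorem chromatic_le_s_add_integral (s : ℕ) (hs : 1 ≤ s) (ψ : ℝ → ℝ)
    (hψpos : ∀ x : ℝ, (s : ℝ) ≤ x → 0 < ψ x)
    (hψmono : ∀ x y : ℝ, (s : ℝ) ≤ x → x ≤ y → ψ x ≤ ψ y)
    (hψcont : ContinuousOn ψ (Set.Ici (s : ℝ)))
    (P : ∀ n : ℕ, SimpleGraph (Fin n) → Prop)
    (hclosed : ∀ (n : ℕ) (G : SimpleGraph (Fin n)) (m : ℕ) (f : Fin m ↪ Fin n),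
      P n G → P m (G.comap f))
    (hindep : ∀ (n : ℕ) (G : SimpleGraph (Fin n)), P n G → s ≤ n →
      ∃ t : Finset (Fin n), ψ (n : ℝ) ≤ (t.card : ℝ) ∧
        ∀ u ∈ t, ∀ v ∈ t, ¬ G.Adj u v)
    (n : ℕ) (hn : s ≤ n) (G : SimpleGraph (Fin n)) (hG : P n G) :
    ∃ N : ℕ, G.chromaticNumber ≤ N ∧
      (N : ℝ) ≤ (s : ℝ) + ∫ x in (s : ℝ)..(n : ℝ), 1 / ψ x := by
  -- integrability of 1/ψ on subintervals of [s, ∞)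
  have hInt : ∀ a b : ℝ, (s : ℝ) ≤ a → a ≤ b →
      IntervalIntegrable (fun x => 1 / ψ x) MeasureTheory.volume a b := by
    intro a b ha hab
    apply ContinuousOn.intervalIntegrable
    have hsub : Set.uIcc a b ⊆ Set.Ici (s : ℝ) := by
      rw [Set.uIcc_of_le hab]
      intro x hx; exact le_trans ha hx.1
    exact continuousOn_const.div (hψcont.mono hsub)
      (fun x hx => (hψpos x (hsub hx)).ne')
  have hnonneg : ∀ a b : ℝ, (s : ℝ) ≤ a → a ≤ b →
      0 ≤ ∫ x in a..b, 1 / ψ x := by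
    intro a b ha hab
    apply intervalIntegral.integral_nonneg hab
    intro x hx
    exact le_of_lt (one_div_pos.mpr (hψpos x (le_trans ha hx.1)))
  have key : ∀ n : ℕ, s ≤ n → ∀ G : SimpleGraph (Fin n), P n G →
      ∃ N : ℕ, G.Colorable N ∧
        (N : ℝ) ≤ (s : ℝ) + ∫ x in (s : ℝ)..(n : ℝ), 1 / ψ x := by
    intro n
    induction n using Nat.strong_induction_on with
    | _ n IH =>
      intro hn G hG
      have hnonneg' : 0 ≤ ∫ x in (s : ℝ)..(n : ℝ), 1 / ψ x :=
        hnonneg _ _ le_rfl (by exact_mod_cast hn)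
      rcases eq_or_lt_of_le hn with heq | hlt
      · -- n = s: trivial coloring with n colors
        subst heq
        exact ⟨s, by simpa using G.colorable_of_fintype, by linarith⟩
      · -- n > s: remove an independent set
        obtain ⟨t, htcard, hti⟩ := hindep n G hG hn
        have htpos : 0 < t.card := by
          by_contra h
          push_neg at h
          interval_cases c : t.card
          · simp at htcard
            exact absurd htcard (not_le.mpr (hψpos _ (by exact_mod_cast hn)))
        have htn : t.card ≤ n := by
          simpa using Finset.card_le_card (Finset.subset_univ t)
        set m := n - t.card with hm
        have hmn : m < n := Nat.sub_lt (lt_of_lt_of_le (Nat.lt_of_lt_of_le Nat.zero_lt_one hs) hn) htpos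
        have hcardc : (tᶜ : Finset (Fin n)).card = m := by
          simp [Finset.card_compl, hm]
        let e : ↥(tᶜ : Finset (Fin n)) ≃ Fin m := (tᶜ).equivFin.trans (finCongr hcardc)
        let f : Fin m ↪ Fin n := e.symm.toEmbedding.trans (Function.Embedding.subtype _)
        have hfe : ∀ x : ↥(tᶜ : Finset (Fin n)), f (e x) = (x : Fin n) := by
          intro x; simp [f]
        have hPm : P m (G.comap f) := hclosed n G m f hG
        -- coloring extension
        have hext : ∀ k : ℕ, (G.comap f).Colorable k → G.Colorable (k + 1) := by
          intro k hk
          obtain ⟨c⟩ := hk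
          let c' : G.Coloring (Option (Fin k)) := SimpleGraph.Coloring.mk
            (fun v => if h : v ∈ t then none
              else some (c (e ⟨v, Finset.mem_compl.mpr h⟩)))
            (by
              intro v w hvw
              by_cases hv : v ∈ t <;> by_cases hw : w ∈ t
              · exact absurd hvw (hti v hv w hw)
              · simp [hv, hw]
              · simp [hv, hw]
              · simp only [hv, hw, dif_neg, not_false_iff]
                have hadj : (G.comap f).Adj (e ⟨v, Finset.mem_compl.mpr hv⟩)
                    (e ⟨w, Finset.mem_compl.mpr hw⟩) := by
                  simp only [SimpleGraph.comap_adj]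
                  rw [hfe, hfe]
                  exact hvw
                have := c.valid hadj
                simpa using this)
          have := c'.colorable
          simpa using this
        have hsn : (s : ℝ) ≤ (n : ℝ) := by exact_mod_cast hn
        by_cases hms : s ≤ m
        · obtain ⟨N', hc', hle'⟩ := IH m hmn hms (G.comap f) hPm
          refine ⟨N' + 1, hext N' hc', ?_⟩
          have hsm : (s : ℝ) ≤ (m : ℝ) := by exact_mod_cast hms
          have hmn' : (m : ℝ) ≤ (n : ℝ) := by exact_mod_cast hmn.le
          have hsplit : (∫ x in (s : ℝ)..(m : ℝ), 1 / ψ x) + ∫ x in (m : ℝ)..(n : ℝ), 1 / ψ x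
              = ∫ x in (s : ℝ)..(n : ℝ), 1 / ψ x :=
            intervalIntegral.integral_add_adjacent_intervals
              (hInt _ _ le_rfl hsm) (hInt _ _ hsm hmn')
          have hmono : (∫ x in (m : ℝ)..(n : ℝ), (fun _ => 1 / ψ (n : ℝ)) x)
              ≤ ∫ x in (m : ℝ)..(n : ℝ), 1 / ψ x := by
            apply intervalIntegral.integral_mono_on hmn' intervalIntegrable_const
              (hInt _ _ hsm hmn')
            intro x hx
            have hsx : (s : ℝ) ≤ x := le_trans hsm hx.1
            exact one_div_le_one_div_of_le (hψpos x hsx) (hψmono x n hsx hx.2)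
          have hconst : (∫ x in (m : ℝ)..(n : ℝ), (fun _ => 1 / ψ (n : ℝ)) x)
              = ((n : ℝ) - m) * (1 / ψ (n : ℝ)) := by
            simp [smul_eq_mul]
          have hnm : (n : ℝ) - (m : ℝ) = (t.card : ℝ) := by
            rw [hm]
            push_cast [Nat.cast_sub htn]
            ring
          have hψn : 0 < ψ (n : ℝ) := hψpos _ hsn
          have h1 : (1 : ℝ) ≤ ∫ x in (m : ℝ)..(n : ℝ), 1 / ψ x := by
            calc (1 : ℝ) = ψ (n : ℝ) * (1 / ψ (n : ℝ)) := by field_simp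
            _ ≤ (t.card : ℝ) * (1 / ψ (n : ℝ)) := by
                apply mul_le_mul_of_nonneg_right htcard
                positivity
            _ = ((n : ℝ) - m) * (1 / ψ (n : ℝ)) := by rw [hnm]
            _ ≤ _ := by rw [← hconst]; exact hmono
          push_cast
          linarith
        · -- remaining graph has fewer than s vertices
          push_neg at hms
          have hcol : G.Colorable s := by
            have := hext m (by simpa using (G.comap f).colorable_of_fintype)
            exact this.mono (by omega)
          exact ⟨s, hcol, by linarith⟩
  obtain ⟨N, hc, hle⟩ := key n hn G hG
  exact ⟨N, hc.chromaticNumber_le, hle⟩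
end
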